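/- arXiv:1602.01776 — 2 statements merged into one kernel-verified Lean document; each statement's English description precedes it below -/
import Mathlib

section
/- Let O be a complete discrete valuation ring with finite residue field, and let M be a finite free O-module with an O-linear endomorphism u. Then the sequence of endomorphisms u^{N!} converges (in the m-adic topology on End_O(M), where m is the maximal ideal of O) to an idempotent e ∈ End_O(M) which commutes with u; moreover u restricts to an automorphism of e·M, and for every m' ∈ (1−e)·M one has u^{N!} m' → 0 as N → ∞. -/
/-!
Modulo `m^k` the endomorphism ring is finite, so the powers of `u` are eventually periodic
there; once `N!` exceeds the preperiod and is divisible by the period, `u^{N!}` no longer changes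
modulo `m^k`. Hence `u^{N!}` and `u^{N!-1}` are `m`-adic Cauchy sequences, converging to some
`e` and `w` since `End_O(M)` is finite free over the complete ring `O`. Identities between
powers of `u` pass to the limit: `e² = e` because `2·N! ≡ N!` modulo the period, `ue = eu`, and
`uw = wu = e`, so `w` inverts `u` on `eM`; finally `u^{N!}(1 - e) → e(1 - e) = 0`.
-/
open Filter IsLocalRing

namespace IsAdicComplete

variable {R : Type*} [CommRing R] {I : Ideal R}

theorem of_linearEquiv {M N : Type*} [AddCommGroup M] [Module R M] [AddCommGroup N] [Module R N]
    [hM : IsAdicComplete I M] (e : M ≃ₗ[R] N) : IsAdicComplete I N := by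
  rw [← AdicCompletion.of_bijective_iff] at hM ⊢
  have h : AdicCompletion.of I N = AdicCompletion.congr I e ∘ AdicCompletion.of I M ∘ e.symm :=
    funext fun x => by simp [AdicCompletion.map_of]
  rw [h]
  exact (AdicCompletion.congr I e).bijective.comp (hM.comp e.symm.bijective)

instance pi {ι : Type*} [Finite ι] {M : ι → Type*} [∀ j, AddCommGroup (M j)]
    [∀ j, Module R (M j)] [hM : ∀ j, IsAdicComplete I (M j)] :
    IsAdicComplete I (∀ j, M j) := by
  classical
  have := Fintype.ofFinite ι
  rw [← AdicCompletion.of_bijective_iff,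
    ← (AdicCompletion.piEquivOfFintype I M).bijective.of_comp_iff']
  have h : AdicCompletion.piEquivOfFintype I M ∘ AdicCompletion.of I (∀ j, M j) =
      Pi.map fun j => AdicCompletion.of I (M j) := by
    ext x j
    simp
  rw [h]
  exact Function.Bijective.piMap fun j => AdicCompletion.of_bijective_iff.mpr (hM j)

theorem of_free [IsAdicComplete I R] (M : Type*) [AddCommGroup M] [Module R M] [Module.Free R M]
    [Module.Finite R M] : IsAdicComplete I M :=
  of_linearEquiv (Module.Free.chooseBasis R M).equivFun.symm

end IsAdicComplete

section AdicTendsto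

variable {R : Type*} [CommRing R] {I : Ideal R}
  {M : Type*} [AddCommGroup M] [Module R M] {N : Type*} [AddCommGroup N] [Module R N]

theorem SModEq.map_smul_top {x y : M} (h : x ≡ y [SMOD (I • ⊤ : Submodule R M)])
    (g : M →ₗ[R] N) : g x ≡ g y [SMOD (I • ⊤ : Submodule R N)] :=
  (h.map g).mono (Submodule.map_le_iff_le_comap.mpr (Submodule.smul_top_le_comap_smul_top I g))

variable (I) in
def AdicTendsto (f : ℕ → M) (x : M) : Prop :=
  ∀ k : ℕ, ∀ᶠ n in atTop, f n ≡ x [SMOD (I ^ k • ⊤ : Submodule R M)]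

namespace AdicTendsto

variable {f g : ℕ → M} {x y : M}

theorem const (x : M) : AdicTendsto I (fun _ => x) x :=
  fun _ => Eventually.of_forall fun _ => SModEq.refl _

theorem unique [IsHausdorff I M] (hx : AdicTendsto I f x) (hy : AdicTendsto I f y) : x = y :=
  IsHausdorff.eq_iff_smodEq.mpr fun k =>
    ((hx k).and (hy k)).exists.elim fun _ h => h.1.symm.trans h.2

theorem congr_sModEq (hf : AdicTendsto I f x)
    (hgf : ∀ k, ∀ᶠ n in atTop, g n ≡ f n [SMOD (I ^ k • ⊤ : Submodule R M)]) :
    AdicTendsto I g x :=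
  fun k => ((hgf k).and (hf k)).mono fun _ h => h.1.trans h.2

theorem map (hf : AdicTendsto I f x) (L : M →ₗ[R] N) : AdicTendsto I (fun n => L (f n)) (L x) :=
  fun k => (hf k).mono fun _ h => h.map_smul_top L

theorem mul {A : Type*} [Ring A] [Algebra R A] {f g : ℕ → A} {x y : A}
    (hf : AdicTendsto I f x) (hg : AdicTendsto I g y) :
    AdicTendsto I (fun n => f n * g n) (x * y) :=
  fun k => ((hf k).and (hg k)).mono fun n h =>
    (h.1.map_smul_top (LinearMap.mulRight R (g n))).trans (h.2.map_smul_top (LinearMap.mulLeft R x))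

end AdicTendsto

theorem IsPrecomplete.exists_adicTendsto [IsPrecomplete I M] {f : ℕ → M}
    (hf : ∀ k, ∃ N₀, ∀ m ≥ N₀, ∀ n ≥ N₀,
      f m ≡ f n [SMOD (I ^ k • ⊤ : Submodule R M)]) :
    ∃ x, AdicTendsto I f x := by
  choose N₀ hN₀ using hf
  set c : ℕ → ℕ := fun k => (Finset.range (k + 1)).sup N₀
  have hc : Monotone c := fun m n hmn => Finset.sup_mono (Finset.range_subset_range.mpr (by omega))
  have hN₀c (k : ℕ) : N₀ k ≤ c k := Finset.le_sup (Finset.self_mem_range_succ k)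
  obtain ⟨x, hx⟩ := IsPrecomplete.prec ‹_› (f := f ∘ c) fun {m n} hmn =>
    hN₀ m _ (hN₀c m) _ ((hN₀c m).trans (hc hmn))
  exact ⟨x, fun k => eventually_atTop.mpr
    ⟨c k, fun n hn => (hN₀ k n ((hN₀c k).trans hn) (c k) (hN₀c k)).trans (hx k)⟩⟩

end AdicTendsto

theorem exists_pow_sModEq_pow_of_modEq {R A : Type*} [CommRing R] [Ring A] [Algebra R A]
    (I : Ideal R) [Finite (A ⧸ (I • ⊤ : Submodule R A))] (a : A) :
    ∃ i p : ℕ, 0 < p ∧ ∀ m n, i ≤ m → i ≤ n → m ≡ n [MOD p] →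
      a ^ m ≡ a ^ n [SMOD (I • ⊤ : Submodule R A)] := by
  obtain ⟨i, p, hp, hip⟩ :
      ∃ i p, 0 < p ∧ a ^ i ≡ a ^ (i + p) [SMOD (I • ⊤ : Submodule R A)] := by
    obtain ⟨i, j, hne, h⟩ := Finite.exists_ne_map_eq_of_infinite
      fun n => Submodule.Quotient.mk (p := (I • ⊤ : Submodule R A)) (a ^ n)
    rcases hne.lt_or_gt with hlt | hlt
    · exact ⟨i, j - i, by omega, by rwa [Nat.add_sub_cancel' hlt.le]⟩
    · exact ⟨j, i - j, by omega, by rw [Nat.add_sub_cancel' hlt.le]; exact h.symm⟩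
  have shift (r : ℕ) : a ^ (i + r) ≡ a ^ (i + p + r) [SMOD (I • ⊤ : Submodule R A)] := by
    simpa [pow_add] using hip.map_smul_top (LinearMap.mulRight R (a ^ r))
  have periodic (r t : ℕ) :
      a ^ (i + r) ≡ a ^ (i + r + p * t) [SMOD (I • ⊤ : Submodule R A)] := by
    induction t with
    | zero => rfl
    | succ t ih =>
      have h := shift (r + p * t)
      rw [← add_assoc, show i + p + (r + p * t) = i + r + p * (t + 1) by ring] at h
      exact ih.trans h
  refine ⟨i, p, hp, fun m n hm hn hmn => ?_⟩
  wlog hle : m ≤ n generalizing m n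
  · exact (this n m hn hm hmn.symm (by omega)).symm
  obtain ⟨t, ht⟩ := (Nat.modEq_iff_dvd' hle).mp hmn
  convert periodic (m - i) t using 2 <;> omega

theorem Nat.eventually_le_factorial_and_dvd (n p : ℕ) (hp : 0 < p) :
    ∀ᶠ N in atTop, n ≤ Nat.factorial N ∧ p ∣ Nat.factorial N :=
  eventually_atTop.mpr ⟨max n p, fun N hN =>
    ⟨(le_of_max_le_left hN).trans N.self_le_factorial,
      Nat.dvd_factorial hp (le_of_max_le_right hN)⟩⟩

theorem finite_quotient_pow_smul_top {R : Type*} [CommRing R] {I : Ideal R} (hI : I.FG)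
    [Finite (R ⧸ I)] (M : Type*) [AddCommGroup M] [Module R M] [Module.Finite R M] (k : ℕ) :
    Finite (M ⧸ (I ^ k • ⊤ : Submodule R M)) :=
  have := Ideal.finite_quotient_pow hI k
  Submodule.finite_quotient_smul _ Module.Finite.fg_top

section OrdinaryProjector

variable {R A : Type*} [CommRing R] [Ring A] [Algebra R A] (I : Ideal R)
  [∀ k, Finite (A ⧸ (I ^ k • ⊤ : Submodule R A))]

theorem exists_adicTendsto_pow_factorial_sub [IsPrecomplete I A] (a : A) (r : ℕ) :
    ∃ x, AdicTendsto I (fun N => a ^ (Nat.factorial N - r)) x := by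
  refine IsPrecomplete.exists_adicTendsto fun k => ?_
  obtain ⟨i, p, hp, hper⟩ := exists_pow_sModEq_pow_of_modEq (I ^ k) a
  obtain ⟨N₀, hN₀⟩ := eventually_atTop.mp (Nat.eventually_le_factorial_and_dvd (i + r) p hp)
  refine ⟨N₀, fun m hm n hn => ?_⟩
  obtain ⟨hm₁, hm₂⟩ := hN₀ m hm
  obtain ⟨hn₁, hn₂⟩ := hN₀ n hn
  refine hper _ _ (by omega) (by omega) (Nat.ModEq.add_right_cancel' r ?_)
  rw [Nat.sub_add_cancel (by omega), Nat.sub_add_cancel (by omega)]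
  exact (Nat.modEq_zero_iff_dvd.mpr hm₂).trans (Nat.modEq_zero_iff_dvd.mpr hn₂).symm

theorem eventually_pow_factorial_mul_self_sModEq (a : A) (k : ℕ) :
    ∀ᶠ N in atTop, a ^ Nat.factorial N * a ^ Nat.factorial N ≡ a ^ Nat.factorial N
      [SMOD (I ^ k • ⊤ : Submodule R A)] := by
  obtain ⟨i, p, hp, hper⟩ := exists_pow_sModEq_pow_of_modEq (I ^ k) a
  filter_upwards [Nat.eventually_le_factorial_and_dvd i p hp] with N ⟨hi, hdvd⟩
  rw [← pow_add]
  exact hper _ _ (by omega) hi ((Nat.modEq_zero_iff_dvd.mpr (dvd_add hdvd hdvd)).trans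
    (Nat.modEq_zero_iff_dvd.mpr hdvd).symm)

theorem exists_adicTendsto_pow_factorial [IsAdicComplete I A] (a : A) :
    ∃ e, AdicTendsto I (fun N => a ^ Nat.factorial N) e ∧ IsIdempotentElem e ∧ Commute a e ∧
      ∃ w, a * w = e ∧ w * a = e := by
  obtain ⟨e, he⟩ : ∃ e, AdicTendsto I (fun N => a ^ Nat.factorial N) e := by
    simpa using exists_adicTendsto_pow_factorial_sub I a 0
  obtain ⟨w, hw⟩ := exists_adicTendsto_pow_factorial_sub I a 1
  have hau := (AdicTendsto.const a).mul he
  have hua := he.mul (AdicTendsto.const a)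
  have haw := (AdicTendsto.const a).mul hw
  have hwa := hw.mul (AdicTendsto.const a)
  have hpred (N : ℕ) : Nat.factorial N - 1 + 1 = Nat.factorial N :=
    Nat.sub_add_cancel N.factorial_pos
  simp only [← pow_succ'] at hau haw
  simp only [← pow_succ] at hua hwa
  simp only [hpred] at haw hwa
  exact ⟨e, he,
    (he.mul he).unique (he.congr_sModEq (eventually_pow_factorial_mul_self_sModEq I a)),
    hau.unique hua, w, haw.unique he, hwa.unique he⟩

end OrdinaryProjector

theorem Module.End.bijOn_range_of_isIdempotentElem {R M : Type*} [Semiring R] [AddCommGroup M]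
    [Module R M] {e u w : Module.End R M} (he : IsIdempotentElem e) (hue : Commute u e)
    (huw : u * w = e) (hwu : w * u = e) :
    Set.BijOn u (LinearMap.range e) (LinearMap.range e) := by
  have fix {x : M} (hx : x ∈ LinearMap.range e) : e x = x :=
    (LinearMap.IsIdempotentElem.mem_range_iff he).mp hx
  refine ⟨?_, fun x hx y hy hxy => ?_, fun x hx => ⟨e (w x), ⟨w x, rfl⟩, ?_⟩⟩
  · rintro _ ⟨z, rfl⟩
    exact ⟨u z, congr($hue.eq.symm z)⟩
  · rw [← fix hx, ← fix hy, ← hwu, Module.End.mul_apply, Module.End.mul_apply, hxy]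
  · calc u (e (w x)) = e ((u * w) x) := congr($hue.eq (w x))
      _ = x := by rw [huw, fix hx, fix hx]

/-- Existence of Hida's ordinary projector `e = lim_N u^{N!}`: if `O` is a complete discrete
valuation ring with finite residue field, `M` a finite free `O`-module and `u` an `O`-linear
endomorphism, then `u^{N!}` converges `m`-adically in `End_O(M)` to an idempotent `e`
commuting with `u`; `u` restricts to an automorphism of `e·M`, and `u^{N!} m' → 0` for every
`m'` in the image of `1 - e`. -/
theorem hida_ordinary_projector {O : Type*} [CommRing O] [IsDomain O]
    [IsDiscreteValuationRing O] [IsAdicComplete (IsLocalRing.maximalIdeal O) O]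
    [Finite (IsLocalRing.ResidueField O)]
    {M : Type*} [AddCommGroup M] [Module O M] [Module.Free O M] [Module.Finite O M]
    (u : Module.End O M) :
    ∃ e : Module.End O M,
      (∀ k : ℕ, ∃ N₀ : ℕ, ∀ N ≥ N₀,
        u ^ Nat.factorial N - e ∈
          (IsLocalRing.maximalIdeal O ^ k) • (⊤ : Submodule O (Module.End O M))) ∧
      IsIdempotentElem e ∧
      Commute u e ∧
      Set.BijOn u (LinearMap.range e : Set M) (LinearMap.range e : Set M) ∧
      ∀ m' ∈ LinearMap.range (1 - e), ∀ k : ℕ, ∃ N₀ : ℕ, ∀ N ≥ N₀,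
        (u ^ Nat.factorial N) m' ∈ (IsLocalRing.maximalIdeal O ^ k) • (⊤ : Submodule O M) := by
  have : IsAdicComplete (maximalIdeal O) (Module.End O M) := .of_free _
  have : Finite (O ⧸ maximalIdeal O) := ‹Finite (ResidueField O)›
  have := finite_quotient_pow_smul_top (maximalIdeal O).fg_of_isNoetherianRing (Module.End O M)
  obtain ⟨e, he, hidem, hcomm, w, huw, hwu⟩ :=
    exists_adicTendsto_pow_factorial (maximalIdeal O) u
  have hker : AdicTendsto (maximalIdeal O) (fun N => u ^ Nat.factorial N * (1 - e)) 0 := by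
    simpa [mul_sub, hidem.eq] using he.mul (AdicTendsto.const (1 - e))
  refine ⟨e, fun k => eventually_atTop.mp ((he k).mono fun _ h => SModEq.sub_mem.mp h), hidem,
    hcomm, Module.End.bijOn_range_of_isIdempotentElem hidem hcomm huw hwu, ?_⟩
  rintro _ ⟨z, rfl⟩ k
  exact eventually_atTop.mp ((hker.map (LinearMap.applyₗ z) k).mono fun _ h => by
    simpa [SModEq.zero] using h)
end

section
/- Let k be a field, V and W finite-dimensional k-vector spaces with a nondegenerate bilinear pairing ⟨·,·⟩: V × W → k. Let u_1, …, u_n be pairwise commuting endomorphisms of V and v_1, …, v_n pairwise commuting endomorphisms of W such that ⟨u_j x, y⟩ = ⟨x, v_j y⟩ for all x ∈ V, y ∈ W, and all j. If there exists a nonzero x ∈ V with u_j x = c_j x for all j (for scalars c_j ∈ k), then there exists a nonzero y ∈ W with v_j y = c_j y for all j. -/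
/-!
Put `T_j = v_j - c_j`. Adjointness gives `⟨x, T_j W⟩ = 0`, so the ranges of the `T_j` do not
span `W`. It remains to see that commuting endomorphisms of a module of finite length with no
common nonzero kernel vector have ranges that span. Inductively, split along the Fitting
decomposition `ker T^N ⊕ range T^N` of one operator `T`: the range summand lies in `range T`,
while on the kernel summand the remaining operators have no common kernel vector either, since
`T` would act nilpotently on such vectors and hence kill one of them.
-/

namespace Module.End

variable {R M ι : Type*} [Ring R] [AddCommGroup M] [Module R M]

lemma mapsTo_ker_of_commute {f g : Module.End R M} (h : Commute f g) :
    ∀ x ∈ LinearMap.ker g, f x ∈ LinearMap.ker g := by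
  intro x hx
  rw [LinearMap.mem_ker] at hx ⊢
  rw [← mul_apply, ← h.eq, mul_apply, hx, map_zero]

lemma eq_zero_of_pow_apply_eq_zero_of_disjoint_ker {f : Module.End R M} {p : Submodule R M}
    (hp : ∀ x ∈ p, f x ∈ p) (hker : Disjoint p (LinearMap.ker f)) {n : ℕ} {x : M} (hx : x ∈ p)
    (hn : (f ^ n) x = 0) : x = 0 := by
  induction n generalizing x with
  | zero => simpa using hn
  | succ n ih =>
    have hfx : f x = 0 := ih (hp x hx) (by rwa [pow_succ, mul_apply] at hn)
    exact Submodule.disjoint_def.mp hker x hx hfx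

lemma exists_le_inf_ker_pow_sup_range [IsArtinian R M] [IsNoetherian R M] (f : Module.End R M)
    {p : Submodule R M} (hp : ∀ x ∈ p, f x ∈ p) :
    ∃ N, p ≤ p ⊓ LinearMap.ker (f ^ N) ⊔ LinearMap.range f := by
  obtain ⟨N, hN⟩ :=
    Filter.eventually_atTop.mp (f.restrict hp).eventually_isCompl_ker_pow_range_pow
  refine ⟨N + 1, fun x hx => ?_⟩
  have hx' : (⟨x, hx⟩ : p) ∈ LinearMap.ker ((f.restrict hp) ^ (N + 1)) ⊔
      LinearMap.range ((f.restrict hp) ^ (N + 1)) := by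
    rw [(hN (N + 1) N.le_succ).codisjoint.eq_top]
    trivial
  obtain ⟨a, ha, b, ⟨z, rfl⟩, hab⟩ := Submodule.mem_sup.mp hx'
  rw [LinearMap.mem_ker, pow_restrict] at ha
  rw [pow_restrict] at hab
  refine Submodule.mem_sup.mpr ⟨a, ⟨a.2, congrArg Subtype.val ha⟩, f ((f ^ N) z), ⟨_, rfl⟩, ?_⟩
  rw [← mul_apply, ← pow_succ']
  exact congrArg Subtype.val hab

variable [IsArtinian R M] [IsNoetherian R M]

theorem le_iSup_range_of_disjoint_iInf_ker {f : ι → Module.End R M}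
    (hf : ∀ i j, Commute (f i) (f j)) (s : Finset ι) {p : Submodule R M}
    (hp : ∀ i, ∀ x ∈ p, f i x ∈ p) (hs : Disjoint p (⨅ i ∈ s, LinearMap.ker (f i))) :
    p ≤ ⨆ i ∈ s, LinearMap.range (f i) := by
  classical
  induction s using Finset.induction_on generalizing p with
  | empty => simpa using hs
  | insert j s hj ih =>
    rw [Finset.iInf_insert] at hs
    obtain ⟨N, hN⟩ := exists_le_inf_ker_pow_sup_range (f j) (hp j)
    have hq : ∀ i, ∀ x ∈ p ⊓ LinearMap.ker (f j ^ N), f i x ∈ p ⊓ LinearMap.ker (f j ^ N) :=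
      fun i x hx => ⟨hp i x hx.1, mapsTo_ker_of_commute ((hf i j).pow_right N) x hx.2⟩
    have hps : ∀ x ∈ p ⊓ ⨅ i ∈ s, LinearMap.ker (f i),
        f j x ∈ p ⊓ ⨅ i ∈ s, LinearMap.ker (f i) := by
      intro x hx
      obtain ⟨hxp, hxs⟩ := Submodule.mem_inf.mp hx
      simp only [Submodule.mem_iInf] at hxs
      refine Submodule.mem_inf.mpr ⟨hp j x hxp, ?_⟩
      simp only [Submodule.mem_iInf]
      exact fun i hi => mapsTo_ker_of_commute (hf j i) x (hxs i hi)
    have hqs : Disjoint (p ⊓ LinearMap.ker (f j ^ N)) (⨅ i ∈ s, LinearMap.ker (f i)) := by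
      refine Submodule.disjoint_def.mpr fun x hxq hxs => ?_
      refine eq_zero_of_pow_apply_eq_zero_of_disjoint_ker hps ?_ ⟨hxq.1, hxs⟩ hxq.2
      exact Submodule.disjoint_def.mpr fun z hz hzj =>
        Submodule.disjoint_def.mp hs z hz.1 ⟨hzj, hz.2⟩
    calc p ≤ p ⊓ LinearMap.ker (f j ^ N) ⊔ LinearMap.range (f j) := hN
      _ ≤ (⨆ i ∈ s, LinearMap.range (f i)) ⊔ LinearMap.range (f j) :=
        sup_le_sup_right (ih hq hqs) _
      _ = ⨆ i ∈ insert j s, LinearMap.range (f i) := by rw [Finset.iSup_insert, sup_comm]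

theorem exists_ne_zero_forall_apply_eq_zero_of_iSup_range_ne_top [Fintype ι]
    {f : ι → Module.End R M} (hf : ∀ i j, Commute (f i) (f j))
    (h : ⨆ i, LinearMap.range (f i) ≠ ⊤) :
    ∃ x ≠ 0, ∀ i, f i x = 0 := by
  by_contra! hx
  have hker : Disjoint ⊤ (⨅ i ∈ Finset.univ, LinearMap.ker (f i)) := by
    refine top_disjoint.mpr ((Submodule.eq_bot_iff _).mpr fun x hx' => ?_)
    simp only [Finset.mem_univ, iInf_pos, Submodule.mem_iInf, LinearMap.mem_ker] at hx'
    by_contra hx0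
    obtain ⟨i, hi⟩ := hx x hx0
    exact hi (hx' i)
  refine h (eq_top_iff.mpr ?_)
  simpa using
    le_iSup_range_of_disjoint_iInf_ker hf Finset.univ (p := ⊤) (fun _ _ _ => trivial) hker

end Module.End

theorem eigenvector_transfer_across_pairing_general {k V W : Type*} [Field k]
    [AddCommGroup V] [Module k V]
    [AddCommGroup W] [Module k W] [FiniteDimensional k W]
    (B : V →ₗ[k] W →ₗ[k] k)
    (hB₁ : ∀ v : V, (∀ w : W, B v w = 0) → v = 0)
    {n : ℕ} (u : Fin n → Module.End k V) (v : Fin n → Module.End k W)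
    (hv : ∀ i j, Commute (v i) (v j))
    (hadj : ∀ (i : Fin n) (x : V) (y : W), B (u i x) y = B x (v i y))
    (c : Fin n → k) (x : V) (hx : x ≠ 0) (hxe : ∀ i, u i x = c i • x) :
    ∃ y : W, y ≠ 0 ∧ ∀ i, v i y = c i • y := by
  set T : Fin n → Module.End k W := fun i => v i - algebraMap k _ (c i)
  have hT : ∀ i j, Commute (T i) (T j) := fun i j =>
    ((hv i j).sub_right (Algebra.commutes _ _).symm).sub_left (Algebra.commute_algebraMap_left _ _)
  have hrange : ⨆ i, LinearMap.range (T i) ≤ LinearMap.ker (B x) := by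
    refine iSup_le fun i => ?_
    rintro _ ⟨y, rfl⟩
    simp [T, ← hadj, hxe]
  have hBx : LinearMap.ker (B x) ≠ ⊤ := by
    rw [Ne, LinearMap.ker_eq_top]
    exact fun h => hx (hB₁ x fun w => by simp [h])
  obtain ⟨y, hy, hTy⟩ :=
    Module.End.exists_ne_zero_forall_apply_eq_zero_of_iSup_range_ne_top hT
      (ne_top_of_le_ne_top hBx hrange)
  exact ⟨y, hy, fun i => sub_eq_zero.mp (by simpa [T] using hTy i)⟩

/-- Transfer of simultaneous eigenvectors across a nondegenerate pairing: if `u_1, …, u_n` are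
commuting endomorphisms of `V`, `v_1, …, v_n` commuting endomorphisms of `W`, adjoint to each
other under a nondegenerate pairing, and `V` contains a nonzero simultaneous eigenvector for
the `u_j` with eigenvalues `c_j`, then `W` contains a nonzero simultaneous eigenvector for the
`v_j` with the same eigenvalues. -/
theorem eigenvector_transfer_across_pairing {k V W : Type*} [Field k]
    [AddCommGroup V] [Module k V] [FiniteDimensional k V]
    [AddCommGroup W] [Module k W] [FiniteDimensional k W]
    (B : V →ₗ[k] W →ₗ[k] k)
    (hB₁ : ∀ v : V, (∀ w : W, B v w = 0) → v = 0)
    (hB₂ : ∀ w : W, (∀ v : V, B v w = 0) → w = 0)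
    {n : ℕ} (u : Fin n → Module.End k V) (v : Fin n → Module.End k W)
    (hu : ∀ i j, Commute (u i) (u j)) (hv : ∀ i j, Commute (v i) (v j))
    (hadj : ∀ (i : Fin n) (x : V) (y : W), B (u i x) y = B x (v i y))
    (c : Fin n → k) (x : V) (hx : x ≠ 0) (hxe : ∀ i, u i x = c i • x) :
    ∃ y : W, y ≠ 0 ∧ ∀ i, v i y = c i • y :=
  eigenvector_transfer_across_pairing_general B hB₁ u v hv hadj c x hx hxe
end
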